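/- arXiv:2410.11683 — 3 statements merged into one kernel-verified Lean document; each statement's English description precedes it below -/
import Mathlib

section
/- Under the MHR assumption, for every t ∈ (t1, t̄] (so that λ(t) < q̄ and 1 − G(λ(t)) > 0), the following identity holds: α(λ(t))·t − P_b*(t) = [∫_{t1}^{t} R*(x)dx − t·∫_{λ(t)}^{q̄} (1 − G(q))α'(q)dq] / (1 − G(λ(t))). -/
open MeasureTheory Set

theorem stmt_14
    (tlo thi qlo qhi : ℝ) (htT : tlo < thi) (hqQ : qlo < qhi)
    (F f d : ℝ → ℝ)
    (hF : ∀ t ∈ Icc tlo thi, HasDerivAt F (f t) t)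
    (hfpos : ∀ t ∈ Icc tlo thi, 0 < f t)
    (hF0 : F tlo = 0) (hF1 : F thi = 1)
    (hdDef : ∀ t ∈ Icc tlo thi, d t = (1 - F t) / f t)
    (d' : ℝ → ℝ)
    (hdDeriv : ∀ t ∈ Icc tlo thi, HasDerivAt d (d' t) t)
    (hMHR : ∀ t ∈ Icc tlo thi, d' t ≤ 0)
    (G g : ℝ → ℝ)
    (hG : ∀ q ∈ Icc qlo qhi, HasDerivAt G (g q) q)
    (hgpos : ∀ q ∈ Icc qlo qhi, 0 < g q)
    (hG0 : G qlo = 0) (hG1 : G qhi = 1)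
    (hgint : IntervalIntegrable g volume qlo qhi)
    (α α' : ℝ → ℝ)
    (hα : ∀ q ∈ Icc qlo qhi, HasDerivAt α (α' q) q)
    (hαpos : ∀ q ∈ Icc qlo qhi, 0 < α q)
    (hα'pos : ∀ q ∈ Icc qlo qhi, 0 < α' q)
    (r : ℝ) (hr : 0 < r)
    (hlow : α qlo * tlo < r) (hhigh : r < α qhi * thi)
    (η : ℝ → ℝ → ℝ)
    (hη : ∀ q t, η q t = α q * (t - d t) - r)
    (lam : ℝ → ℝ)
    (hlamQ : ∀ t ∈ Icc tlo thi, lam t ∈ Icc qlo qhi)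
    (hlamLo : ∀ t ∈ Icc tlo thi, (∀ q ∈ Icc qlo qhi, 0 < η q t) → lam t = qlo)
    (hlamMid : ∀ t ∈ Icc tlo thi, ∀ q0 ∈ Icc qlo qhi, η q0 t = 0 → lam t = q0)
    (hlamHi : ∀ t ∈ Icc tlo thi, (∀ q ∈ Icc qlo qhi, η q t < 0) → lam t = qhi)
    (t1 : ℝ) (ht1 : t1 = sInf {t ∈ Icc tlo thi | lam t < qhi})
    (Rstar : ℝ → ℝ) (hRstar : ∀ t, Rstar t = ∫ q in lam t..qhi, α q * g q)
    (Pbstar : ℝ → ℝ)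
    (hPb1 : ∀ t, t1 ≤ t → t ≤ thi →
      Pbstar t = (t * (∫ q in lam t..qhi, α q * g q) - ∫ x in t1..t, Rstar x) / (1 - G (lam t)))
    (hPb2 : ∀ t, tlo ≤ t → t < t1 → Pbstar t = α qhi * t1)
    (t : ℝ) (htmem : t1 < t) (htle : t ≤ thi)
    :
    lam t < qhi ∧ 0 < 1 - G (lam t) ∧
      α (lam t) * t - Pbstar t =
        ((∫ x in t1..t, Rstar x) - t * ∫ q in lam t..qhi, (1 - G q) * α' q) /
          (1 - G (lam t)) := by
  have hq : qlo ≤ qhi := le_of_lt hqQ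
  have htT' : tlo ≤ thi := le_of_lt htT
  have hαc : ContinuousOn α (Icc qlo qhi) :=
    fun q hq => (hα q hq).continuousAt.continuousWithinAt
  have hGc : ContinuousOn G (Icc qlo qhi) :=
    fun q hq => (hG q hq).continuousAt.continuousWithinAt
  have hαmono : StrictMonoOn α (Icc qlo qhi) := by
    apply strictMonoOn_of_deriv_pos (convex_Icc _ _) hαc
    intro x hx
    rw [interior_Icc] at hx
    have hx' : x ∈ Icc qlo qhi := Ioo_subset_Icc_self hx
    rw [(hα x hx').deriv]
    exact hα'pos x hx'
  have hGmono : StrictMonoOn G (Icc qlo qhi) := by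
    apply strictMonoOn_of_deriv_pos (convex_Icc _ _) hGc
    intro x hx
    rw [interior_Icc] at hx
    have hx' : x ∈ Icc qlo qhi := Ioo_subset_Icc_self hx
    rw [(hG x hx').deriv]
    exact hgpos x hx'
  -- ψ = t - d t is strictly monotone on [tlo, thi]
  have hψd : ∀ s ∈ Icc tlo thi, HasDerivAt (fun x => x - d x) (1 - d' s) s :=
    fun s hs => (hasDerivAt_id s).sub (hdDeriv s hs)
  have hψc : ContinuousOn (fun x => x - d x) (Icc tlo thi) :=
    fun s hs => (hψd s hs).continuousAt.continuousWithinAt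
  have hψmono : StrictMonoOn (fun x => x - d x) (Icc tlo thi) := by
    apply strictMonoOn_of_deriv_pos (convex_Icc _ _) hψc
    intro x hx
    rw [interior_Icc] at hx
    have hx' : x ∈ Icc tlo thi := Ioo_subset_Icc_self hx
    rw [(hψd x hx').deriv]
    have := hMHR x hx'
    linarith
  -- forward: positive η at qhi implies lam < qhi
  have fwd : ∀ s ∈ Icc tlo thi, 0 < η qhi s → lam s < qhi := by
    intro s hs hpos
    have hqhi : qhi ∈ Icc qlo qhi := ⟨hq, le_refl _⟩
    have hqlo : qlo ∈ Icc qlo qhi := ⟨le_refl _, hq⟩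
    have hφ : 0 < s - d s := by
      by_contra hc
      push_neg at hc
      have : α qhi * (s - d s) ≤ 0 :=
        mul_nonpos_of_nonneg_of_nonpos (le_of_lt (hαpos qhi hqhi)) hc
      rw [hη] at hpos
      linarith
    rcases lt_trichotomy (η qlo s) 0 with hneg | hzero | hpos'
    · -- IVT: there is q0 with η q0 s = 0
      have hcont : ContinuousOn (fun q => η q s) (Icc qlo qhi) := by
        have : (fun q => η q s) = fun q => α q * (s - d s) - r := by
          funext q; rw [hη]
        rw [this]
        exact (hαc.mul continuousOn_const).sub continuousOn_const
      have h0mem : (0 : ℝ) ∈ Icc (η qlo s) (η qhi s) := ⟨le_of_lt hneg, le_of_lt hpos⟩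
      obtain ⟨q0, hq0mem, hq0⟩ := intermediate_value_Icc hq hcont h0mem
      have hlam := hlamMid s hs q0 hq0mem hq0
      rw [hlam]
      rcases lt_or_eq_of_le hq0mem.2 with h | h
      · exact h
      · exfalso
        have : η qhi s = 0 := by simpa using h ▸ hq0
        linarith
    · have := hlamMid s hs qlo hqlo hzero
      rw [this]; exact hqQ
    · -- all η positive
      have hall : ∀ q ∈ Icc qlo qhi, 0 < η q s := by
        intro q hqm
        have hαle : α qlo ≤ α q := by
          rcases lt_or_eq_of_le hqm.1 with h | h
          · exact le_of_lt (hαmono hqlo hqm h)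
          · rw [h]
        have : α qlo * (s - d s) ≤ α q * (s - d s) :=
          mul_le_mul_of_nonneg_right hαle (le_of_lt hφ)
        rw [hη] at hpos' ⊢
        linarith
      rw [hlamLo s hs hall]; exact hqQ
  -- backward: lam < qhi implies η at qhi nonneg
  have bwd : ∀ s ∈ Icc tlo thi, lam s < qhi → 0 ≤ η qhi s := by
    intro s hs hlt
    by_contra hc
    push_neg at hc
    have hqhi : qhi ∈ Icc qlo qhi := ⟨hq, le_refl _⟩
    have hall : ∀ q ∈ Icc qlo qhi, η q s < 0 := by
      intro q hqm
      rcases le_or_gt (s - d s) 0 with hφ | hφ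
      · have : α q * (s - d s) ≤ 0 :=
          mul_nonpos_of_nonneg_of_nonpos (le_of_lt (hαpos q hqm)) hφ
        rw [hη]; linarith
      · have hαle : α q ≤ α qhi := by
          rcases lt_or_eq_of_le hqm.2 with h | h
          · exact le_of_lt (hαmono hqm hqhi h)
          · rw [h]
        have : α q * (s - d s) ≤ α qhi * (s - d s) :=
          mul_le_mul_of_nonneg_right hαle (le_of_lt hφ)
        rw [hη] at hc ⊢
        linarith
    have := hlamHi s hs hall
    rw [this] at hlt
    exact lt_irrefl _ hlt
  -- thi is in the set S
  have hthiIcc : thi ∈ Icc tlo thi := ⟨htT', le_refl _⟩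
  have hdthi : d thi = 0 := by
    rw [hdDef thi hthiIcc, hF1]; simp
  have hηthi : 0 < η qhi thi := by
    rw [hη, hdthi]; simpa using sub_pos.mpr hhigh
  have hthiS : thi ∈ {s | s ∈ Icc tlo thi ∧ lam s < qhi} :=
    ⟨hthiIcc, fwd thi hthiIcc hηthi⟩
  have hSne : Set.Nonempty {s | s ∈ Icc tlo thi ∧ lam s < qhi} := ⟨thi, hthiS⟩
  have ht1lo : tlo ≤ t1 := by
    rw [ht1]
    exact le_csInf hSne (fun s hs => hs.1.1)
  have htIcc : t ∈ Icc tlo thi := ⟨le_trans ht1lo (le_of_lt htmem), htle⟩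
  obtain ⟨s, hsS, hst⟩ : ∃ s ∈ {s | s ∈ Icc tlo thi ∧ lam s < qhi}, s < t := by
    apply exists_lt_of_csInf_lt hSne
    rw [← ht1]; exact htmem
  have hηt : 0 < η qhi t := by
    have h1 : 0 ≤ η qhi s := bwd s hsS.1 hsS.2
    have h2 : η qhi s < η qhi t := by
      rw [hη, hη]
      have := hψmono hsS.1 htIcc hst
      have hα0 : 0 < α qhi := hαpos qhi ⟨hq, le_refl _⟩
      have : α qhi * (s - d s) < α qhi * (t - d t) := by
        apply mul_lt_mul_of_pos_left _ hα0
        exact this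
      linarith
    linarith
  have hlt : lam t < qhi := fwd t htIcc hηt
  -- G part
  have hLmem : lam t ∈ Icc qlo qhi := hlamQ t htIcc
  have hGlt : G (lam t) < 1 := by
    rw [← hG1]
    exact hGmono hLmem ⟨hq, le_refl _⟩ hlt
  have hD : 0 < 1 - G (lam t) := by linarith
  refine ⟨hlt, hD, ?_⟩
  -- integration by parts
  set L := lam t with hL
  have hLle : L ≤ qhi := le_of_lt hlt
  have hsub : Icc L qhi ⊆ Icc qlo qhi := Icc_subset_Icc hLmem.1 (le_refl _)
  have huIcc : uIcc L qhi = Icc L qhi := uIcc_of_le hLle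
  have hgint' : IntervalIntegrable g volume L qhi := by
    apply hgint.mono_set
    rw [huIcc, uIcc_of_le hq]; exact hsub
  have hα'int : IntervalIntegrable α' volume L qhi := by
    apply intervalIntegral.intervalIntegrable_deriv_of_nonneg
    · rw [huIcc]; exact hαc.mono hsub
    · intro x hx
      rw [min_eq_left hLle, max_eq_right hLle] at hx
      exact hα x (hsub (Ioo_subset_Icc_self hx))
    · intro x hx
      rw [min_eq_left hLle, max_eq_right hLle] at hx
      exact le_of_lt (hα'pos x (hsub (Ioo_subset_Icc_self hx)))
  have hparts : (∫ q in L..qhi, (1 - G q) * α' q)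
      = (1 - G qhi) * α qhi - (1 - G L) * α L - ∫ q in L..qhi, (-g q) * α q := by
    apply intervalIntegral.integral_mul_deriv_eq_deriv_mul
    · intro x hx
      rw [huIcc] at hx
      exact (hG x (hsub hx)).const_sub 1
    · intro x hx
      rw [huIcc] at hx
      exact hα x (hsub hx)
    · exact hgint'.neg
    · exact hα'int
  have hJ : (∫ q in L..qhi, (1 - G q) * α' q)
      = (∫ q in L..qhi, α q * g q) - α L * (1 - G L) := by
    rw [hparts, hG1]
    have hswap : (∫ q in L..qhi, (-g q) * α q) = -(∫ q in L..qhi, α q * g q) := by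
      rw [← intervalIntegral.integral_neg]
      congr 1; funext q; ring
    rw [hswap]; ring
  rw [hPb1 t (le_of_lt htmem) htle, hJ, ← hL]
  have hDne : (1 - G L) ≠ 0 := ne_of_gt hD
  field_simp
  ring
end

section
/- (Obedience of the no-trade recommendation.) Under the MHR assumption, for every t ∈ (t1, t̄] with λ(t) > q̲: ∫_{q̲}^{λ(t)} (α(q)t − P_b*(t))·g(q) dq < 0; that is, a buyer of type t who updates beliefs to q < λ(t) upon the no-trade signal strictly prefers not to buy the item at price P_b*(t). -/
open MeasureTheory Set
open scoped ENNReal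

/-- Mean value theorem packaged for `HasDerivAt` on a closed interval. -/
lemma mvt_aux {a b : ℝ} {F f : ℝ → ℝ} (hF : ∀ x ∈ Icc a b, HasDerivAt F (f x) x)
    {x y : ℝ} (hx : x ∈ Icc a b) (hy : y ∈ Icc a b) (hxy : x < y) :
    ∃ c ∈ Ioo x y, F y - F x = f c * (y - x) := by
  have hsub : Icc x y ⊆ Icc a b := Icc_subset_Icc hx.1 hy.2
  have hcont : ContinuousOn F (Icc x y) := fun z hz =>
    ((hF z (hsub hz)).continuousAt).continuousWithinAt
  have hderiv : ∀ z ∈ Ioo x y, HasDerivAt F (f z) z := fun z hz =>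
    hF z (hsub (Ioo_subset_Icc_self hz))
  obtain ⟨c, hc, hceq⟩ := exists_hasDerivAt_eq_slope F f hxy hcont hderiv
  refine ⟨c, hc, ?_⟩
  rw [hceq, div_mul_cancel₀ _ (sub_ne_zero.mpr hxy.ne')]
set_option maxHeartbeats 4000000 in
theorem stmt_16
    (tlo thi qlo qhi : ℝ) (htT : tlo < thi) (hqQ : qlo < qhi)
    (F f d : ℝ → ℝ)
    (hF : ∀ t ∈ Icc tlo thi, HasDerivAt F (f t) t)
    (hfpos : ∀ t ∈ Icc tlo thi, 0 < f t)
    (hF0 : F tlo = 0) (hF1 : F thi = 1)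
    (hdDef : ∀ t ∈ Icc tlo thi, d t = (1 - F t) / f t)
    (d' : ℝ → ℝ)
    (hdDeriv : ∀ t ∈ Icc tlo thi, HasDerivAt d (d' t) t)
    (hMHR : ∀ t ∈ Icc tlo thi, d' t ≤ 0)
    (G g : ℝ → ℝ)
    (hG : ∀ q ∈ Icc qlo qhi, HasDerivAt G (g q) q)
    (hgpos : ∀ q ∈ Icc qlo qhi, 0 < g q)
    (hG0 : G qlo = 0) (hG1 : G qhi = 1)
    (hgint : IntervalIntegrable g volume qlo qhi)
    (α α' : ℝ → ℝ)
    (hα : ∀ q ∈ Icc qlo qhi, HasDerivAt α (α' q) q)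
    (hαpos : ∀ q ∈ Icc qlo qhi, 0 < α q)
    (hα'pos : ∀ q ∈ Icc qlo qhi, 0 < α' q)
    (r : ℝ) (hr : 0 < r)
    (hlow : α qlo * tlo < r) (hhigh : r < α qhi * thi)
    (η : ℝ → ℝ → ℝ)
    (hη : ∀ q t, η q t = α q * (t - d t) - r)
    (lam : ℝ → ℝ)
    (hlamQ : ∀ t ∈ Icc tlo thi, lam t ∈ Icc qlo qhi)
    (hlamLo : ∀ t ∈ Icc tlo thi, (∀ q ∈ Icc qlo qhi, 0 < η q t) → lam t = qlo)
    (hlamMid : ∀ t ∈ Icc tlo thi, ∀ q0 ∈ Icc qlo qhi, η q0 t = 0 → lam t = q0)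
    (hlamHi : ∀ t ∈ Icc tlo thi, (∀ q ∈ Icc qlo qhi, η q t < 0) → lam t = qhi)
    (t1 : ℝ) (ht1 : t1 = sInf {t ∈ Icc tlo thi | lam t < qhi})
    (Rstar : ℝ → ℝ) (hRstar : ∀ t, Rstar t = ∫ q in lam t..qhi, α q * g q)
    (Pbstar : ℝ → ℝ)
    (hPb1 : ∀ t, t1 ≤ t → t ≤ thi →
      Pbstar t = (t * (∫ q in lam t..qhi, α q * g q) - ∫ x in t1..t, Rstar x) / (1 - G (lam t)))
    (hPb2 : ∀ t, tlo ≤ t → t < t1 → Pbstar t = α qhi * t1)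
    (t : ℝ) (htmem : t1 < t) (htle : t ≤ thi) (hlamt : qlo < lam t)
    :
    (∫ q in qlo..lam t, (α q * t - Pbstar t) * g q) < 0 := by
  -- Notation
  set T : Set ℝ := Icc tlo thi with hT
  set Q : Set ℝ := Icc qlo qhi with hQ
  set L : ℝ := lam t with hLdef
  -- ### Basic monotonicity facts from MVT
  have hd0 : ∀ x ∈ T, 0 ≤ d x := by
    intro x hx
    have hFx : F x ≤ 1 := by
      rcases eq_or_lt_of_le hx.2 with h | h
      · rw [h, hF1]
      · obtain ⟨c, hc, hceq⟩ := mvt_aux hF hx (right_mem_Icc.mpr htT.le) h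
        have hcT : c ∈ T := ⟨le_trans hx.1 hc.1.le, hc.2.le⟩
        nlinarith [hfpos c hcT, hF1]
    rw [hdDef x hx]
    have h1 := hfpos x hx
    have h2 : 0 ≤ 1 - F x := by linarith
    positivity
  have hdanti : ∀ x ∈ T, ∀ y ∈ T, x ≤ y → d y ≤ d x := by
    intro x hx y hy hxy
    rcases eq_or_lt_of_le hxy with rfl | h
    · exact le_refl _
    · obtain ⟨c, hc, hceq⟩ := mvt_aux hdDeriv hx hy h
      have hcT : c ∈ T := ⟨le_trans hx.1 hc.1.le, le_trans hc.2.le hy.2⟩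
      nlinarith [hMHR c hcT]
  have hαmono : ∀ q ∈ Q, ∀ q' ∈ Q, q < q' → α q < α q' := by
    intro q hq q' hq' h
    obtain ⟨c, hc, hceq⟩ := mvt_aux hα hq hq' h
    have hcQ : c ∈ Q := ⟨le_trans hq.1 hc.1.le, le_trans hc.2.le hq'.2⟩
    nlinarith [hα'pos c hcQ]
  have hGmono : ∀ q ∈ Q, ∀ q' ∈ Q, q < q' → G q < G q' := by
    intro q hq q' hq' h
    obtain ⟨c, hc, hceq⟩ := mvt_aux hG hq hq' h
    have hcQ : c ∈ Q := ⟨le_trans hq.1 hc.1.le, le_trans hc.2.le hq'.2⟩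
    nlinarith [hgpos c hcQ]
  have hηt : ∀ q ∈ Q, ∀ x ∈ T, ∀ y ∈ T, x < y → η q x < η q y := by
    intro q hq x hx y hy hxy
    have hdd : d y ≤ d x := hdanti x hx y hy hxy.le
    have h1 : η q y - η q x = α q * ((y - d y) - (x - d x)) := by rw [hη, hη]; ring
    nlinarith [hαpos q hq]
  have hηqlt : ∀ x ∈ T, ∀ q ∈ Q, ∀ q' ∈ Q, q < q' → 0 ≤ η q x → η q x < η q' x := by
    intro x hx q hq q' hq' hqq' h0
    have hqx := hη q x
    have hmx : 0 < x - d x := by nlinarith [hαpos q hq]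
    have hαα : α q < α q' := hαmono q hq q' hq' hqq'
    have h1 : η q' x - η q x = (α q' - α q) * (x - d x) := by rw [hη, hη]; ring
    nlinarith
  have hηq : ∀ x ∈ T, ∀ q ∈ Q, ∀ q' ∈ Q, q ≤ q' → 0 ≤ η q x → η q x ≤ η q' x := by
    intro x hx q hq q' hq' hqq' h0
    have hqx := hη q x
    have hmx : 0 < x - d x := by nlinarith [hαpos q hq]
    have hαα : α q ≤ α q' := by
      rcases eq_or_lt_of_le hqq' with rfl | h
      · exact le_refl _
      · exact (hαmono q hq q' hq' h).le
    have h1 : η q' x - η q x = (α q' - α q) * (x - d x) := by rw [hη, hη]; ring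
    nlinarith
  have hαcont' : ContinuousOn α Q := fun q hq => (hα q hq).continuousAt.continuousWithinAt
  -- ### Determination of lam
  have spec : ∀ x ∈ T, η (lam x) x = 0 ∨ (lam x = qlo ∧ 0 < η qlo x) ∨
      (lam x = qhi ∧ η qhi x < 0) := by
    intro x hx
    have hqloQ : qlo ∈ Q := left_mem_Icc.mpr hqQ.le
    have hqhiQ : qhi ∈ Q := right_mem_Icc.mpr hqQ.le
    by_cases hm : x - d x ≤ 0
    · have hneg : ∀ q ∈ Q, η q x < 0 := by
        intro q hq
        rw [hη]
        nlinarith [hαpos q hq, mul_nonpos_of_nonneg_of_nonpos (hαpos q hq).le hm]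
      exact Or.inr (Or.inr ⟨hlamHi x hx hneg, hneg qhi hqhiQ⟩)
    · push_neg at hm
      by_cases h1 : 0 < η qlo x
      · have hposall : ∀ q ∈ Q, 0 < η q x := by
          intro q hq
          have h2 : η q x - η qlo x = (α q - α qlo) * (x - d x) := by rw [hη, hη]; ring
          rcases eq_or_lt_of_le hq.1 with rfl | hlt
          · exact h1
          · nlinarith [hαmono qlo hqloQ q hq hlt]
        exact Or.inr (Or.inl ⟨hlamLo x hx hposall, h1⟩)
      · push_neg at h1
        by_cases h2 : η qhi x < 0
        · have hneg : ∀ q ∈ Q, η q x < 0 := by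
            intro q hq
            have h3 : η qhi x - η q x = (α qhi - α q) * (x - d x) := by rw [hη, hη]; ring
            rcases eq_or_lt_of_le hq.2 with heq | hlt
            · rw [heq]; exact h2
            · nlinarith [hαmono q hq qhi hqhiQ hlt]
          exact Or.inr (Or.inr ⟨hlamHi x hx hneg, h2⟩)
        · push_neg at h2
          have hcont : ContinuousOn (fun q => η q x) Q := by
            have : (fun q => η q x) = fun q => α q * (x - d x) - r := by
              funext q; exact hη q x
            rw [this]
            exact (hαcont'.mul continuousOn_const).sub continuousOn_const
          have h0mem : (0:ℝ) ∈ Icc (η qlo x) (η qhi x) := ⟨h1, h2⟩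
          obtain ⟨q0, hq0Q, hq0⟩ := intermediate_value_Icc hqQ.le hcont h0mem
          exact Or.inl (by rw [hlamMid x hx q0 hq0Q hq0]; exact hq0)
  have lam_le : ∀ x ∈ T, ∀ q ∈ Q, 0 ≤ η q x → lam x ≤ q := by
    intro x hx q hq h0
    have hqhiQ : qhi ∈ Q := right_mem_Icc.mpr hqQ.le
    rcases spec x hx with h | ⟨hq0, _⟩ | ⟨hq0, hneg⟩
    · by_contra hc
      push_neg at hc
      have := hηqlt x hx q hq (lam x) (hlamQ x hx) hc h0
      linarith
    · rw [hq0]; exact hq.1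
    · have := hηq x hx q hq qhi hqhiQ hq.2 h0
      linarith
  have lam_anti : ∀ x ∈ T, ∀ y ∈ T, x ≤ y → lam y ≤ lam x := by
    intro x hx y hy hxy
    rcases eq_or_lt_of_le hxy with rfl | h
    · exact le_refl _
    have hqloQ : qlo ∈ Q := left_mem_Icc.mpr hqQ.le
    rcases spec x hx with hsp | ⟨hq0, hpos⟩ | ⟨hq0, _⟩
    · exact lam_le y hy (lam x) (hlamQ x hx) (by linarith [hηt (lam x) (hlamQ x hx) x hx y hy h])
    · rw [hq0]
      exact lam_le y hy qlo hqloQ (by linarith [hηt qlo hqloQ x hx y hy h])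
    · rw [hq0]; exact (hlamQ y hy).2
  have eta_lam_nonneg : ∀ x ∈ T, lam x < qhi → 0 ≤ η (lam x) x := by
    intro x hx hlt
    rcases spec x hx with h | ⟨hq0, hpos⟩ | ⟨hq0, _⟩
    · exact h.ge
    · rw [hq0]; exact hpos.le
    · exact absurd hq0 (by linarith)
  -- ### The set S and t1
  set S : Set ℝ := {x ∈ T | lam x < qhi} with hS
  have hdthi : d thi = 0 := by
    rw [hdDef thi (right_mem_Icc.mpr htT.le), hF1]
    simp
  have hSne : thi ∈ S := by
    have hthiT : thi ∈ T := right_mem_Icc.mpr htT.le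
    have hpos : 0 < η qhi thi := by rw [hη, hdthi]; linarith
    refine ⟨hthiT, ?_⟩
    rcases spec thi hthiT with h | ⟨hq0, _⟩ | ⟨_, hneg⟩
    · rcases eq_or_lt_of_le (hlamQ thi hthiT).2 with heq | hlt
      · rw [heq] at h; linarith
      · exact hlt
    · rw [hq0]; exact hqQ
    · linarith
  have hSbdd : BddBelow S := ⟨tlo, fun x hx => hx.1.1⟩
  have hSpos : ∀ x ∈ S, 0 < x := by
    intro x hx
    have h0 := eta_lam_nonneg x hx.1 hx.2
    rw [hη] at h0
    have hmx : 0 < x - d x := by nlinarith [hαpos (lam x) (hlamQ x hx.1)]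
    linarith [hd0 x hx.1]
  have ht1lo : tlo ≤ t1 := by rw [ht1]; exact le_csInf ⟨thi, hSne⟩ fun x hx => hx.1.1
  have ht10 : 0 ≤ t1 := by rw [ht1]; exact le_csInf ⟨thi, hSne⟩ fun x hx => (hSpos x hx).le
  have htmemT : t ∈ T := ⟨le_trans ht1lo htmem.le, htle⟩
  have hLhi : L < qhi := by
    have hlt : sInf S < t := by rw [← ht1]; exact htmem
    obtain ⟨y, hyS, hyt⟩ := exists_lt_of_csInf_lt ⟨thi, hSne⟩ hlt
    exact lt_of_le_of_lt (lam_anti y hyS.1 t htmemT hyt.le) hyS.2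
  have hLQ : L ∈ Q := hlamQ t htmemT
  have hηL : η L t = 0 := by
    rcases spec t htmemT with h | ⟨hq0, _⟩ | ⟨hq0, _⟩
    · exact h
    · rw [hLdef] at hlamt; rw [hq0] at hlamt; linarith
    · rw [hLdef] at hLhi; rw [hq0] at hLhi; linarith
  have hmt : 0 < t - d t := by
    have h := hηL
    rw [hη] at h
    have h2 : 0 < α L * (t - d t) := by linarith
    rcases mul_pos_iff.mp h2 with ⟨_, h3⟩ | ⟨h3, _⟩
    · exact h3
    · exact absurd (hαpos L hLQ) (by linarith)
  have ht0 : 0 < t := lt_of_le_of_lt (hd0 t htmemT) (by linarith)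
  have hαL : 0 < α L := hαpos L hLQ
  have hIcc1t : Icc t1 t ⊆ T := Icc_subset_Icc ht1lo htle
  -- ### tau
  set τ : ℝ → ℝ := fun q => sInf (insert t {x ∈ Icc t1 t | lam x ≤ q}) with hτ
  have hτbdd : ∀ q : ℝ, BddBelow (insert t {x ∈ Icc t1 t | lam x ≤ q}) := by
    intro q
    refine ⟨t1, ?_⟩
    intro x hx
    rcases Set.mem_insert_iff.mp hx with rfl | hx'
    · exact htmem.le
    · exact hx'.1.1
  have hτge : ∀ q, t1 ≤ τ q := by
    intro q
    refine le_csInf ⟨t, mem_insert _ _⟩ ?_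
    intro x hx
    rcases Set.mem_insert_iff.mp hx with rfl | hx'
    · exact htmem.le
    · exact hx'.1.1
  have hτle : ∀ q, τ q ≤ t := fun q => csInf_le (hτbdd q) (mem_insert _ _)
  have hτanti : Antitone τ := by
    intro q q' hqq'
    exact csInf_le_csInf (hτbdd q') ⟨t, mem_insert _ _⟩
      (insert_subset_insert fun x hx => ⟨hx.1, le_trans hx.2 hqq'⟩)
  have hτmem : ∀ x ∈ Icc t1 t, ∀ q, lam x ≤ q → τ q ≤ x := by
    intro x hx q hq
    exact csInf_le (hτbdd q) (mem_insert_of_mem _ ⟨hx, hq⟩)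
  -- key lower bound on τ
  have hηLr : α L * (t - d t) = r := by have h := hηL; rw [hη] at h; linarith
  have hτkey : ∀ q ∈ Ico L qhi, α L * t ≤ α q * τ q := by
    intro q hq
    have hqQ' : q ∈ Q := ⟨le_of_lt (lt_of_lt_of_le hlamt hq.1), hq.2.le⟩
    have hαq : 0 < α q := hαpos q hqQ'
    have hαLq : α L ≤ α q := by
      rcases eq_or_lt_of_le hq.1 with rfl | h
      · exact le_refl _
      · exact (hαmono L hLQ q hqQ' h).le
    have hbound : ∀ z ∈ insert t {x ∈ Icc t1 t | lam x ≤ q}, α L * t / α q ≤ z := by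
      intro z hz
      rcases Set.mem_insert_iff.mp hz with heq | hz'
      · rw [heq, div_le_iff₀ hαq]
        calc α L * t ≤ α q * t := mul_le_mul_of_nonneg_right hαLq ht0.le
          _ = t * α q := mul_comm _ _
      obtain ⟨hz1, hz2⟩ := hz'
      · have hzT : z ∈ T := hIcc1t hz1
        have hlamz : 0 ≤ η (lam z) z := eta_lam_nonneg z hzT (lt_of_le_of_lt hz2 hq.2)
        have hηqz : 0 ≤ η q z := by
          rcases eq_or_lt_of_le hz2 with rfl | h
          · exact hlamz
          · exact le_trans hlamz (hηq z hzT (lam z) (hlamQ z hzT) q hqQ' hz2 hlamz)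
        rw [hη] at hηqz
        have hdz : d t ≤ d z := hdanti z hzT t htmemT hz1.2
        have hdt0 : 0 ≤ d t := hd0 t htmemT
        have h5 : α L * d t ≤ α q * d z := mul_le_mul hαLq hdz hdt0 hαq.le
        rw [div_le_iff₀ hαq]
        have e1 : α L * t = α L * (t - d t) + α L * d t := by ring
        have e2 : α q * (z - d z) = α q * z - α q * d z := by ring
        rw [e2] at hηqz
        rw [e1, hηLr]
        have : α q * z = z * α q := mul_comm _ _
        linarith
    have h6 : α L * t / α q ≤ τ q := le_csInf ⟨t, mem_insert _ _⟩ hbound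
    rw [div_le_iff₀ hαq] at h6
    calc α L * t ≤ τ q * α q := h6
      _ = α q * τ q := by ring
  -- ### Integrability toolkit
  have hαcont : ContinuousOn α Q := fun q hq => (hα q hq).continuousAt.continuousWithinAt
  have hAGint : IntervalIntegrable (fun q => α q * g q) volume qlo qhi := by
    exact hgint.continuousOn_mul (by rwa [uIcc_of_le hqQ.le])
  set Ahat : ℝ → ℝ := fun u => ∫ q in u..qhi, α q * g q with hAhat
  -- ### The big bound
  have hIbound : (∫ x in t1..t, Rstar x) ≤ t * (Ahat L - α L * (1 - G L)) := by
    have hqloL : qlo < L := hlamt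
    have hIooQ : Ioo L qhi ⊆ Ioo qlo qhi := Ioo_subset_Ioo hqloL.le (le_refl _)
    -- continuous extension of α, and a measurable version of the integrand
    set clampq : ℝ → ℝ := fun q => max qlo (min q qhi) with hclamp
    have hclampcont : Continuous clampq := continuous_const.max (continuous_id.min continuous_const)
    have hclampmem : ∀ q, clampq q ∈ Q := fun q => ⟨le_max_left _ _, max_le hqQ.le (min_le_right _ _)⟩
    set αc : ℝ → ℝ := fun q => α (clampq q) with hαcdef
    have hαccont : Continuous αc := hαcont'.comp_continuous hclampcont hclampmem
    set AGm : ℝ → ℝ := fun q => αc q * deriv G q with hAGmdef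
    have hAGmmeas : Measurable AGm := (hαccont.measurable).mul (measurable_deriv G)
    have hAGmeq : ∀ q ∈ Ioo qlo qhi, AGm q = α q * g q := by
      intro q hq
      have h1 : clampq q = q := by
        rw [hclamp]; dsimp only; rw [min_eq_left hq.2.le, max_eq_right hq.1.le]
      have h2 : deriv G q = g q := (hG q ⟨hq.1.le, hq.2.le⟩).deriv
      rw [hAGmdef]; dsimp only; rw [hαcdef]; dsimp only; rw [h1, h2]
    have hAGnn : ∀ q ∈ Ioo qlo qhi, 0 ≤ AGm q := by
      intro q hq
      rw [hAGmeq q hq]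
      exact (mul_pos (hαpos q ⟨hq.1.le, hq.2.le⟩) (hgpos q ⟨hq.1.le, hq.2.le⟩)).le
    have hAGmIntIoo : IntegrableOn AGm (Ioo L qhi) volume := by
      have h1 : IntegrableOn (fun q => α q * g q) (Ioo L qhi) volume :=
        hAGint.1.mono_set (fun q hq => ⟨hqloL.trans hq.1, hq.2.le⟩)
      exact h1.congr_fun (fun q hq => (hAGmeq q (hIooQ hq)).symm) measurableSet_Ioo
    have hτmeas : Measurable τ := hτanti.measurable
    have hDmeas : ∀ x : ℝ, MeasurableSet {q : ℝ | τ q ≤ x} := fun x => hτmeas measurableSet_Iic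
    have hae : ∀ s : Set ℝ, s ⊆ Ioo qlo qhi → MeasurableSet s →
        0 ≤ᵐ[volume.restrict s] AGm := by
      intro s hs hms
      refine (ae_restrict_iff' hms).mpr (ae_of_all _ ?_)
      exact fun q hq => hAGnn q (hs hq)
    -- Ahat is antitone
    have hAhat_anti : ∀ u ∈ Q, ∀ v ∈ Q, u ≤ v → Ahat v ≤ Ahat u := by
      intro u hu v hv huv
      have h1 : IntervalIntegrable (fun q => α q * g q) volume u v :=
        hAGint.mono_set (by rw [uIcc_of_le huv, uIcc_of_le hqQ.le]; exact Icc_subset_Icc hu.1 hv.2)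
      have h2 : IntervalIntegrable (fun q => α q * g q) volume v qhi :=
        hAGint.mono_set
          (by rw [uIcc_of_le hv.2, uIcc_of_le hqQ.le]; exact Icc_subset_Icc hv.1 (le_refl _))
      have h3 : Ahat u = (∫ q in u..v, α q * g q) + Ahat v := by
        rw [hAhat]
        exact (intervalIntegral.integral_add_adjacent_intervals h1 h2).symm
      have h4 : 0 ≤ ∫ q in u..v, α q * g q := by
        apply intervalIntegral.integral_nonneg huv
        intro q hq
        have hqQ2 : q ∈ Q := ⟨le_trans hu.1 hq.1, le_trans hq.2 hv.2⟩
        exact (mul_pos (hαpos q hqQ2) (hgpos q hqQ2)).le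
      linarith
    have hlamx_mem : ∀ x ∈ Icc t1 t, L ≤ lam x ∧ lam x ∈ Q := by
      intro x hx
      have hxT : x ∈ T := hIcc1t hx
      exact ⟨lam_anti x hxT t htmemT hx.2, hlamQ x hxT⟩
    have hRe : (∫ x in t1..t, Rstar x) = ∫ x in t1..t, Ahat (lam x) := by
      apply intervalIntegral.integral_congr
      intro x _
      rw [hRstar x, hAhat]
    -- The comparison function B
    set B : ℝ → ℝ := fun x => ∫ q in Ioo L qhi ∩ {q | τ q ≤ x}, AGm q with hB
    have hBsetmeas : ∀ x : ℝ, MeasurableSet (Ioo L qhi ∩ {q : ℝ | τ q ≤ x}) :=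
      fun x => measurableSet_Ioo.inter (hDmeas x)
    have hBsetsub : ∀ x : ℝ, Ioo L qhi ∩ {q : ℝ | τ q ≤ x} ⊆ Ioo qlo qhi :=
      fun x => inter_subset_left.trans hIooQ
    have hmonoB : Monotone B := by
      intro x y hxy
      rw [hB]
      apply setIntegral_mono_set (hAGmIntIoo.mono_set inter_subset_left)
        (hae _ (hBsetsub y) (hBsetmeas y))
      exact HasSubset.Subset.eventuallyLE
        (inter_subset_inter_right _ (fun q hq => le_trans hq hxy))
    have hBle : ∀ x ∈ Icc t1 t, Ahat (lam x) ≤ B x := by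
      intro x hx
      obtain ⟨hLlam, hlamQ2⟩ := hlamx_mem x hx
      have heq1 : Ahat (lam x) = ∫ q in Ioo (lam x) qhi, AGm q := by
        rw [hAhat]
        dsimp only
        rw [intervalIntegral.integral_of_le hlamQ2.2, integral_Ioc_eq_integral_Ioo]
        apply setIntegral_congr_fun measurableSet_Ioo
        intro q hq
        exact (hAGmeq q ⟨hqloL.trans (lt_of_le_of_lt hLlam hq.1), hq.2⟩).symm
      rw [heq1, hB]
      apply setIntegral_mono_set (hAGmIntIoo.mono_set inter_subset_left)
        (hae _ (hBsetsub x) (hBsetmeas x))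
      apply HasSubset.Subset.eventuallyLE
      intro q hq
      exact ⟨⟨lt_of_le_of_lt hLlam hq.1, hq.2⟩, hτmem x hx q hq.1.le⟩
    have hBintvl : IntervalIntegrable B volume t1 t :=
      (hmonoB.monotoneOn _).intervalIntegrable
    have hAlamInt : IntervalIntegrable (fun x => Ahat (lam x)) volume t1 t := by
      apply MonotoneOn.intervalIntegrable
      rw [uIcc_of_le htmem.le]
      intro x hx y hy hxy
      exact hAhat_anti (lam y) (hlamx_mem y hy).2 (lam x) (hlamx_mem x hx).2
        (lam_anti x (hIcc1t hx) y (hIcc1t hy) hxy)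
    have step3 : (∫ x in t1..t, Ahat (lam x)) ≤ ∫ x in t1..t, B x :=
      intervalIntegral.integral_mono_on htmem.le hAlamInt hBintvl hBle
    -- ψ : the pointwise bound on t - τ
    set ψ : ℝ → ℝ := fun q => t * (α q - α L) / α q with hψdef
    have hψfacts : ∀ q ∈ Ioo L qhi, 0 ≤ ψ q ∧ t - τ q ≤ ψ q ∧ 0 ≤ AGm q := by
      intro q hq
      have hqQ' : q ∈ Q := ⟨(hqloL.trans hq.1).le, hq.2.le⟩
      have hαq : 0 < α q := hαpos q hqQ'
      have hαLq : α L ≤ α q := (hαmono L hLQ q hqQ' hq.1).le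
      have hkey := hτkey q ⟨hq.1.le, hq.2⟩
      refine ⟨?_, ?_, hAGnn q (hIooQ hq)⟩
      · simp only [hψdef]
        exact div_nonneg (mul_nonneg ht0.le (by linarith)) hαq.le
      · simp only [hψdef]
        rw [le_div_iff₀ hαq]
        ring_nf
        ring_nf at hkey
        linarith [hkey]
    -- the nonnegative kernel
    set φ : ℝ → ℝ≥0∞ := fun q => ENNReal.ofReal (AGm q) with hφdef
    have hφmeas : Measurable φ := hAGmmeas.ennreal_ofReal
    have hBofReal : ∀ x : ℝ, ENNReal.ofReal (B x) = ∫⁻ q in Ioo L qhi ∩ {q | τ q ≤ x}, φ q := by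
      intro x
      have hint : IntegrableOn AGm (Ioo L qhi ∩ {q | τ q ≤ x}) volume :=
        hAGmIntIoo.mono_set inter_subset_left
      have hfin : (∫⁻ q in Ioo L qhi ∩ {q | τ q ≤ x}, φ q) ≠ ⊤ := by
        refine (lt_of_le_of_lt (lintegral_mono_set inter_subset_left) ?_).ne
        exact hAGmIntIoo.lintegral_lt_top
      rw [hB]
      dsimp only
      rw [integral_eq_lintegral_of_nonneg_ae (hae _ (hBsetsub x) (hBsetmeas x))
        hint.aestronglyMeasurable]
      rw [ENNReal.ofReal_toReal hfin]
    have hBnn : ∀ x : ℝ, 0 ≤ B x := by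
      intro x
      rw [hB]
      exact setIntegral_nonneg (hBsetmeas x) (fun q hq => hAGnn q (hBsetsub x hq))
    have step4a : (∫ x in t1..t, B x) = ∫ x in Ioc t1 t, B x :=
      intervalIntegral.integral_of_le htmem.le
    have step4b : (∫ x in Ioc t1 t, B x) = (∫⁻ x in Ioc t1 t, ENNReal.ofReal (B x)).toReal :=
      integral_eq_lintegral_of_nonneg_ae (ae_of_all _ hBnn)
        (hmonoB.measurable.aestronglyMeasurable)
    -- rewrite inner lintegral as an indicator integral over the fixed set
    have hLH : (∫⁻ x in Ioc t1 t, ENNReal.ofReal (B x))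
        = ∫⁻ x in Ioc t1 t, ∫⁻ q in Ioo L qhi, (if τ q ≤ x then φ q else 0) := by
      apply lintegral_congr
      intro x
      rw [hBofReal x]
      have h1 : (fun q => if τ q ≤ x then φ q else 0)
          = ({q : ℝ | τ q ≤ x}).indicator φ := by
        funext q
        simp [Set.indicator_apply, Set.mem_setOf_eq]
      rw [h1, lintegral_indicator (hDmeas x)]
      rw [Measure.restrict_restrict (hDmeas x), inter_comm]
    -- swap the two lintegrals
    have hswap : (∫⁻ x in Ioc t1 t, ∫⁻ q in Ioo L qhi, (if τ q ≤ x then φ q else 0))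
        = ∫⁻ q in Ioo L qhi, ∫⁻ x in Ioc t1 t, (if τ q ≤ x then φ q else 0) := by
      apply lintegral_lintegral_swap
      have hm : Measurable (fun p : ℝ × ℝ => if τ p.2 ≤ p.1 then φ p.2 else 0) := by
        refine Measurable.ite ?_ (hφmeas.comp measurable_snd) measurable_const
        exact measurableSet_le (hτmeas.comp measurable_snd) measurable_fst
      exact hm.aemeasurable
    -- evaluate/bound the inner integral
    have hinner : ∀ q : ℝ, (∫⁻ x in Ioc t1 t, (if τ q ≤ x then φ q else 0))
        ≤ φ q * ENNReal.ofReal (t - τ q) := by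
      intro q
      have h1 : (fun x : ℝ => if τ q ≤ x then φ q else 0)
          = (Ici (τ q)).indicator (fun _ => φ q) := by
        funext x
        simp [Set.indicator_apply, Set.mem_Ici]
      rw [h1, lintegral_indicator measurableSet_Ici, setLIntegral_const,
        Measure.restrict_apply measurableSet_Ici]
      apply mul_le_mul_right
      calc volume (Ici (τ q) ∩ Ioc t1 t) ≤ volume (Icc (τ q) t) :=
            measure_mono (fun x hx => ⟨hx.1, hx.2.2⟩)
        _ = ENNReal.ofReal (t - τ q) := Real.volume_Icc
    have hLsub : Icc L qhi ⊆ Q := Icc_subset_Icc hLQ.1 (le_refl _)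
    have hprod_int : IntegrableOn (fun q => AGm q * ψ q) (Ioo L qhi) volume := by
      have hIccint : IntegrableOn AGm (Icc L qhi) volume :=
        (integrableOn_Icc_iff_integrableOn_Ioo).mpr hAGmIntIoo
      have hψcont : ContinuousOn ψ (Icc L qhi) := by
        simp only [hψdef]
        apply ContinuousOn.div
        · exact continuousOn_const.mul ((hαcont'.mono hLsub).sub continuousOn_const)
        · exact hαcont'.mono hLsub
        · exact fun q hq => (hαpos q (hLsub hq)).ne'
      exact (hIccint.mul_continuousOn hψcont isCompact_Icc).mono_set Ioo_subset_Icc_self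
    have hRH : (∫⁻ q in Ioo L qhi, ∫⁻ x in Ioc t1 t, (if τ q ≤ x then φ q else 0))
        ≤ ∫⁻ q in Ioo L qhi, ENNReal.ofReal (AGm q * ψ q) := by
      apply lintegral_mono_ae
      refine (ae_restrict_iff' measurableSet_Ioo).mpr (ae_of_all _ ?_)
      intro q hq
      obtain ⟨hψ0, hψ1, hAG0⟩ := hψfacts q hq
      calc (∫⁻ x in Ioc t1 t, (if τ q ≤ x then φ q else 0))
          ≤ φ q * ENNReal.ofReal (t - τ q) := hinner q
        _ ≤ φ q * ENNReal.ofReal (ψ q) := mul_le_mul_right (ENNReal.ofReal_le_ofReal hψ1) _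
        _ = ENNReal.ofReal (AGm q * ψ q) := by
            simp only [hφdef]
            rw [← ENNReal.ofReal_mul hAG0]
    have hRHfin : (∫⁻ q in Ioo L qhi, ENNReal.ofReal (AGm q * ψ q)) ≠ ⊤ :=
      hprod_int.lintegral_lt_top.ne
    have hRHval : (∫⁻ q in Ioo L qhi, ENNReal.ofReal (AGm q * ψ q)).toReal
        = ∫ q in Ioo L qhi, AGm q * ψ q := by
      have hpos : 0 ≤ᵐ[volume.restrict (Ioo L qhi)] fun q => AGm q * ψ q := by
        refine (ae_restrict_iff' measurableSet_Ioo).mpr (ae_of_all _ ?_)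
        intro q hq
        obtain ⟨hψ0, _, hAG0⟩ := hψfacts q hq
        exact mul_nonneg hAG0 hψ0
      rw [integral_eq_lintegral_of_nonneg_ae hpos hprod_int.aestronglyMeasurable]
    have hval : (∫ q in Ioo L qhi, AGm q * ψ q) = t * (Ahat L - α L * (1 - G L)) := by
      have h1 : (∫ q in Ioo L qhi, AGm q * ψ q)
          = ∫ q in Ioo L qhi, (t * (α q * g q) - (t * α L) * g q) := by
        apply setIntegral_congr_fun measurableSet_Ioo
        intro q hq
        have hq2 := hIooQ hq
        have hαq : α q ≠ 0 := (hαpos q ⟨hq2.1.le, hq2.2.le⟩).ne'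
        simp only [hψdef]
        rw [hAGmeq q hq2]
        field_simp
      have hint1 : IntegrableOn (fun q => t * (α q * g q)) (Ioo L qhi) volume :=
        (hAGint.1.mono_set (fun q hq => ⟨hqloL.trans hq.1, hq.2.le⟩)).const_mul t
      have hint2 : IntegrableOn (fun q => (t * α L) * g q) (Ioo L qhi) volume :=
        (hgint.1.mono_set (fun q hq => ⟨hqloL.trans hq.1, hq.2.le⟩)).const_mul (t * α L)
      rw [h1, integral_sub hint1 hint2, integral_const_mul, integral_const_mul]
      have hA : (∫ q in Ioo L qhi, α q * g q) = Ahat L := by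
        rw [hAhat]
        dsimp only
        rw [intervalIntegral.integral_of_le hLQ.2, integral_Ioc_eq_integral_Ioo]
      have hgG : (∫ q in Ioo L qhi, g q) = 1 - G L := by
        have hftc : (∫ q in L..qhi, g q) = G qhi - G L := by
          apply intervalIntegral.integral_eq_sub_of_hasDerivAt
          · intro q hq
            rw [uIcc_of_le hLhi.le] at hq
            exact hG q (hLsub hq)
          · exact hgint.mono_set (by rw [uIcc_of_le hLhi.le, uIcc_of_le hqQ.le]; exact hLsub)
        rw [← integral_Ioc_eq_integral_Ioo, ← intervalIntegral.integral_of_le hLhi.le, hftc, hG1]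
      rw [hA, hgG]
      ring
    calc (∫ x in t1..t, Rstar x) = ∫ x in t1..t, Ahat (lam x) := hRe
      _ ≤ ∫ x in t1..t, B x := step3
      _ = (∫⁻ x in Ioc t1 t, ENNReal.ofReal (B x)).toReal := by rw [step4a, step4b]
      _ ≤ (∫⁻ q in Ioo L qhi, ENNReal.ofReal (AGm q * ψ q)).toReal := by
          apply ENNReal.toReal_mono hRHfin
          rw [hLH, hswap]
          exact hRH
      _ = ∫ q in Ioo L qhi, AGm q * ψ q := hRHval
      _ = t * (Ahat L - α L * (1 - G L)) := hval


  -- ### From the bound to the price inequality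
  have hGL1 : 0 < 1 - G L := by
    have := hGmono L hLQ qhi (right_mem_Icc.mpr hqQ.le) hLhi
    rw [hG1] at this
    linarith
  have hPge : α L * t ≤ Pbstar t := by
    have hPval := hPb1 t htmem.le htle
    rw [hPval, le_div_iff₀ hGL1]
    have : (∫ q in lam t..qhi, α q * g q) = Ahat L := rfl
    rw [this]
    have hexp : t * (Ahat L - α L * (1 - G L)) = t * Ahat L - α L * t * (1 - G L) := by ring
    rw [hexp] at hIbound
    linarith
  -- ### Conclusion
  have hsub : uIcc qlo L ⊆ uIcc qlo qhi := by
    rw [uIcc_of_le hlamt.le, uIcc_of_le hqQ.le]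
    exact Icc_subset_Icc (le_refl _) hLQ.2
  have hgint' : IntervalIntegrable g volume qlo L := hgint.mono_set hsub
  have hcont2 : ContinuousOn (fun q => Pbstar t - α q * t) (uIcc qlo L) := by
    refine continuousOn_const.sub (ContinuousOn.mul ?_ continuousOn_const)
    exact hαcont'.mono (by rw [uIcc_of_le hlamt.le]; exact Icc_subset_Icc (le_refl _) hLQ.2)
  have hIntegr : IntervalIntegrable (fun q => (Pbstar t - α q * t) * g q) volume qlo L :=
    hgint'.continuousOn_mul hcont2
  have hposint : 0 < ∫ q in qlo..L, (Pbstar t - α q * t) * g q := by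
    refine intervalIntegral.intervalIntegral_pos_of_pos_on hIntegr ?_ hlamt
    intro x hx
    have hxQ : x ∈ Q := ⟨hx.1.le, le_trans hx.2.le hLQ.2⟩
    have h1 : α x < α L := hαmono x hxQ L hLQ hx.2
    have h2 : α x * t < α L * t := mul_lt_mul_of_pos_right h1 ht0
    exact mul_pos (by linarith [hPge]) (hgpos x hxQ)
  have heq : (fun q => (α q * t - Pbstar t) * g q) = fun q => -((Pbstar t - α q * t) * g q) := by
    funext q; ring
  rw [heq, intervalIntegral.integral_neg]
  linarith
end

section
/- Under the MHR assumption, for every t ∈ T: t·∫_Q α(q)g(q)dq − P_b*(t̄) ≤ ∫_{λ(t̄)}^{q̄} (α(q)t − P_b*(t̄))·g(q) dq, i.e., the prior-belief surplus of a type-t buyer from buying at the lowest price P_b*(t̄) is at most U*(t̄; t), the utility of a type-t buyer who misreports t̄ and follows recommendations under (π*, P_b*). -/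
open MeasureTheory Set


lemma aux_swap (t1 thi lo hi r : ℝ) (ht : t1 ≤ thi) (hlh : lo ≤ hi)
    (A k : ℝ → ℝ) (hA : Continuous A) (ε : ℝ) (hε : 0 < ε) (hAlb : ∀ q, ε ≤ A q)
    (hk : IntegrableOn k (Set.Ioc lo hi))
    (hknn : ∀ q ∈ Set.Ioc lo hi, 0 ≤ k q)
    (hthr : ∀ q ∈ Set.Ioc lo hi, r ≤ A q * thi) :
    (∫ x in Set.Ioc t1 thi, ∫ q in Set.Ioc lo hi, (if r ≤ x * A q then k q else 0))
      ≤ ∫ q in Set.Ioc lo hi, (thi - r / A q) * k q := by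
  set μ := volume.restrict (Set.Ioc t1 thi) with hμ
  set ν := volume.restrict (Set.Ioc lo hi) with hν
  haveI : IsFiniteMeasure μ := by
    constructor
    rw [hμ, Measure.restrict_apply_univ]
    exact measure_Ioc_lt_top
  haveI : IsFiniteMeasure ν := by
    constructor
    rw [hν, Measure.restrict_apply_univ]
    exact measure_Ioc_lt_top
  have hApos : ∀ q, 0 < A q := fun q => hε.trans_le (hAlb q)
  -- measurability of the uncurried function
  obtain ⟨k', hk'sm, hkk'⟩ := hk.1
  have hS : MeasurableSet {p : ℝ × ℝ | r ≤ p.1 * A p.2} :=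
    (isClosed_le continuous_const (continuous_fst.mul (hA.comp continuous_snd))).measurableSet
  have f'sm : StronglyMeasurable (fun p : ℝ × ℝ => if r ≤ p.1 * A p.2 then k' p.2 else 0) := by
    have := (hk'sm.comp_measurable (measurable_snd : Measurable (Prod.snd : ℝ × ℝ → ℝ))).indicator hS
    convert this using 1
    ext p; simp [Set.indicator_apply]
  have aemeas : AEStronglyMeasurable (fun p : ℝ × ℝ => if r ≤ p.1 * A p.2 then k p.2 else 0)
      (μ.prod ν) := by
    refine ⟨_, f'sm, ?_⟩
    have hN : ν {q | k q ≠ k' q} = 0 := hkk'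
    have hnull : (μ.prod ν) (Prod.snd ⁻¹' {q | k q ≠ k' q}) = 0 := by
      have : (Prod.snd ⁻¹' {q | k q ≠ k' q} : Set (ℝ × ℝ)) = Set.univ ×ˢ {q | k q ≠ k' q} := by
        ext p; simp
      rw [this, Measure.prod_prod, hN, mul_zero]
    refine Filter.eventuallyEq_iff_exists_mem.2 ⟨(Prod.snd ⁻¹' {q | k q ≠ k' q})ᶜ, ?_, ?_⟩
    · rw [mem_ae_iff, compl_compl]; exact hnull
    · intro p hp
      simp only [Set.mem_compl_iff, Set.mem_preimage, Set.mem_setOf_eq, not_not] at hp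
      simp [hp]
  have dom : Integrable (fun p : ℝ × ℝ => k p.2) (μ.prod ν) := by
    have := (integrable_const (1 : ℝ) (μ := μ)).mul_prod hk
    simpa using this
  have hFint : Integrable (fun p : ℝ × ℝ => if r ≤ p.1 * A p.2 then k p.2 else 0) (μ.prod ν) := by
    refine dom.norm.mono' aemeas ?_
    refine Filter.Eventually.of_forall fun p => ?_
    by_cases h : r ≤ p.1 * A p.2 <;> simp [h, abs_nonneg]
  have swap :
      (∫ x, ∫ q, (if r ≤ x * A q then k q else 0) ∂ν ∂μ)
        = ∫ q, ∫ x, (if r ≤ x * A q then k q else 0) ∂μ ∂ν :=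
    integral_integral_swap hFint
  have inner : ∀ q ∈ Set.Ioc lo hi,
      (∫ x, (if r ≤ x * A q then k q else 0) ∂μ) = (thi - max t1 (r / A q)) * k q := by
    intro q hq
    have hAq : 0 < A q := hApos q
    have hc_le : r / A q ≤ thi := by
      rw [div_le_iff₀ hAq]
      linarith [hthr q hq, mul_comm (A q) thi]
    have hset : (fun x => if r ≤ x * A q then k q else 0)
        = (Set.Ici (r / A q)).indicator (fun _ => k q) := by
      funext x
      simp only [Set.indicator_apply, Set.mem_Ici, div_le_iff₀ hAq]
    rw [hset, integral_indicator_const _ measurableSet_Ici, measureReal_def, hμ,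
      Measure.restrict_apply measurableSet_Ici]
    rcases le_or_gt (r / A q) t1 with hc | hc
    · have : Set.Ici (r / A q) ∩ Set.Ioc t1 thi = Set.Ioc t1 thi :=
        Set.inter_eq_self_of_subset_right (fun x hx => le_trans hc (le_of_lt hx.1))
      rw [this, Real.volume_Ioc, ENNReal.toReal_ofReal (by linarith), max_eq_left hc,
        smul_eq_mul]
    · have : Set.Ici (r / A q) ∩ Set.Ioc t1 thi = Set.Icc (r / A q) thi := by
        ext x
        simp only [Set.mem_inter_iff, Set.mem_Ici, Set.mem_Ioc, Set.mem_Icc]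
        constructor
        · rintro ⟨h1, _, h3⟩; exact ⟨h1, h3⟩
        · rintro ⟨h1, h2⟩; exact ⟨h1, lt_of_lt_of_le hc h1, h2⟩
      rw [this, Real.volume_Icc, ENNReal.toReal_ofReal (by linarith),
        max_eq_right (le_of_lt hc), smul_eq_mul]
  have congr1 : (∫ q, ∫ x, (if r ≤ x * A q then k q else 0) ∂μ ∂ν)
      = ∫ q in Set.Ioc lo hi, (thi - max t1 (r / A q)) * k q := by
    rw [hν]
    exact setIntegral_congr_fun measurableSet_Ioc fun q hq => inner q hq
  have intL : Integrable (fun q => (thi - max t1 (r / A q)) * k q) ν := by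
    have h0 : Integrable (fun q => ∫ x, (if r ≤ x * A q then k q else 0) ∂μ) ν :=
      hFint.integral_prod_right
    refine h0.congr ?_
    rw [hν]
    refine (ae_restrict_iff' measurableSet_Ioc).2 (Filter.Eventually.of_forall ?_)
    intro q hq
    exact (inner q hq)
  have intR : Integrable (fun q => (thi - r / A q) * k q) ν := by
    refine hk.bdd_mul (c := |thi| + |r| / ε) ?_ ?_
    · exact (continuous_const.sub (continuous_const.div hA fun q => (hApos q).ne')).aestronglyMeasurable
    · refine Filter.Eventually.of_forall fun q => ?_
      have h1 : |r / A q| ≤ |r| / ε := by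
        rw [abs_div, abs_of_pos (hApos q)]
        gcongr
        exact hAlb q
      calc ‖thi - r / A q‖ ≤ |thi| + |r / A q| := abs_sub _ _
        _ ≤ |thi| + |r| / ε := by linarith
  have final : (∫ q in Set.Ioc lo hi, (thi - max t1 (r / A q)) * k q)
      ≤ ∫ q in Set.Ioc lo hi, (thi - r / A q) * k q := by
    refine setIntegral_mono_on (by rw [hν] at intL; exact intL) (by rw [hν] at intR; exact intR)
      measurableSet_Ioc ?_
    intro q hq
    have : r / A q ≤ max t1 (r / A q) := le_max_right _ _
    exact mul_le_mul_of_nonneg_right (by linarith) (hknn q hq)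
  calc (∫ x in Set.Ioc t1 thi, ∫ q in Set.Ioc lo hi, (if r ≤ x * A q then k q else 0))
      = ∫ q, ∫ x, (if r ≤ x * A q then k q else 0) ∂μ ∂ν := swap
    _ = ∫ q in Set.Ioc lo hi, (thi - max t1 (r / A q)) * k q := congr1
    _ ≤ _ := final

set_option maxHeartbeats 1000000 in
theorem stmt_17
    (tlo thi qlo qhi : ℝ) (htT : tlo < thi) (hqQ : qlo < qhi)
    (F f d : ℝ → ℝ)
    (hF : ∀ t ∈ Icc tlo thi, HasDerivAt F (f t) t)
    (hfpos : ∀ t ∈ Icc tlo thi, 0 < f t)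
    (hF0 : F tlo = 0) (hF1 : F thi = 1)
    (hdDef : ∀ t ∈ Icc tlo thi, d t = (1 - F t) / f t)
    (d' : ℝ → ℝ)
    (hdDeriv : ∀ t ∈ Icc tlo thi, HasDerivAt d (d' t) t)
    (hMHR : ∀ t ∈ Icc tlo thi, d' t ≤ 0)
    (G g : ℝ → ℝ)
    (hG : ∀ q ∈ Icc qlo qhi, HasDerivAt G (g q) q)
    (hgpos : ∀ q ∈ Icc qlo qhi, 0 < g q)
    (hG0 : G qlo = 0) (hG1 : G qhi = 1)
    (hgint : IntervalIntegrable g volume qlo qhi)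
    (α α' : ℝ → ℝ)
    (hα : ∀ q ∈ Icc qlo qhi, HasDerivAt α (α' q) q)
    (hαpos : ∀ q ∈ Icc qlo qhi, 0 < α q)
    (hα'pos : ∀ q ∈ Icc qlo qhi, 0 < α' q)
    (r : ℝ) (hr : 0 < r)
    (hlow : α qlo * tlo < r) (hhigh : r < α qhi * thi)
    (η : ℝ → ℝ → ℝ)
    (hη : ∀ q t, η q t = α q * (t - d t) - r)
    (lam : ℝ → ℝ)
    (hlamQ : ∀ t ∈ Icc tlo thi, lam t ∈ Icc qlo qhi)
    (hlamLo : ∀ t ∈ Icc tlo thi, (∀ q ∈ Icc qlo qhi, 0 < η q t) → lam t = qlo)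
    (hlamMid : ∀ t ∈ Icc tlo thi, ∀ q0 ∈ Icc qlo qhi, η q0 t = 0 → lam t = q0)
    (hlamHi : ∀ t ∈ Icc tlo thi, (∀ q ∈ Icc qlo qhi, η q t < 0) → lam t = qhi)
    (t1 : ℝ) (ht1 : t1 = sInf {t ∈ Icc tlo thi | lam t < qhi})
    (Rstar : ℝ → ℝ) (hRstar : ∀ t, Rstar t = ∫ q in lam t..qhi, α q * g q)
    (Pbstar : ℝ → ℝ)
    (hPb1 : ∀ t, t1 ≤ t → t ≤ thi →
      Pbstar t = (t * (∫ q in lam t..qhi, α q * g q) - ∫ x in t1..t, Rstar x) / (1 - G (lam t)))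
    (hPb2 : ∀ t, tlo ≤ t → t < t1 → Pbstar t = α qhi * t1)
    :
    ∀ t ∈ Icc tlo thi,
      t * (∫ q in qlo..qhi, α q * g q) - Pbstar thi ≤
        ∫ q in lam thi..qhi, (α q * t - Pbstar thi) * g q := by
  have hqloQ : qlo ∈ Icc qlo qhi := ⟨le_rfl, hqQ.le⟩
  have hqhiQ : qhi ∈ Icc qlo qhi := ⟨hqQ.le, le_rfl⟩
  have hthiI : thi ∈ Icc tlo thi := ⟨htT.le, le_rfl⟩
  have hαcont : ContinuousOn α (Icc qlo qhi) :=
    fun q hq => (hα q hq).continuousAt.continuousWithinAt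
  have hαmono : StrictMonoOn α (Icc qlo qhi) := by
    apply strictMonoOn_of_deriv_pos (convex_Icc _ _) hαcont
    intro x hx
    rw [interior_Icc] at hx
    rw [(hα x (Ioo_subset_Icc_self hx)).deriv]
    exact hα'pos x (Ioo_subset_Icc_self hx)
  have hαloP : 0 < α qlo := hαpos qlo hqloQ
  have hthipos : 0 < thi := by nlinarith [hαpos qhi hqhiQ]
  -- F ≤ 1 on Icc, d ≥ 0, d thi = 0
  have hFmono : MonotoneOn F (Icc tlo thi) := by
    apply monotoneOn_of_deriv_nonneg (convex_Icc _ _)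
      (fun x hx => (hF x hx).continuousAt.continuousWithinAt)
    · intro x hx
      rw [interior_Icc] at hx
      exact ((hF x (Ioo_subset_Icc_self hx)).differentiableAt.differentiableWithinAt)
    · intro x hx
      rw [interior_Icc] at hx
      rw [(hF x (Ioo_subset_Icc_self hx)).deriv]
      exact (hfpos x (Ioo_subset_Icc_self hx)).le
  have hdnn : ∀ x ∈ Icc tlo thi, 0 ≤ d x := by
    intro x hx
    rw [hdDef x hx]
    have : F x ≤ 1 := hF1 ▸ hFmono hx hthiI hx.2
    exact div_nonneg (by linarith) (hfpos x hx).le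
  have hdthi : d thi = 0 := by
    rw [hdDef thi hthiI, hF1]; simp
  have hsmono : MonotoneOn (fun x => x - d x) (Icc tlo thi) := by
    apply monotoneOn_of_deriv_nonneg (convex_Icc _ _)
      (fun x hx => (((hasDerivAt_id x).sub (hdDeriv x hx)).continuousAt).continuousWithinAt)
    · intro x hx
      rw [interior_Icc] at hx
      exact ((hasDerivAt_id x).sub (hdDeriv x (Ioo_subset_Icc_self hx))).differentiableAt.differentiableWithinAt
    · intro x hx
      rw [interior_Icc] at hx
      rw [((hasDerivAt_id x).sub (hdDeriv x (Ioo_subset_Icc_self hx))).deriv]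
      have := hMHR x (Ioo_subset_Icc_self hx)
      linarith
  -- trichotomy
  have tri : ∀ x ∈ Icc tlo thi,
      (∀ q ∈ Icc qlo qhi, η q x < 0) ∨ (∃ q0 ∈ Icc qlo qhi, η q0 x = 0) ∨
        (∀ q ∈ Icc qlo qhi, 0 < η q x) := by
    intro x hx
    rcases le_or_gt (x - d x) 0 with hs | hs
    · left; intro q hq; rw [hη]; nlinarith [hαpos q hq]
    · rcases lt_trichotomy (η qlo x) 0 with h1 | h1 | h1
      · rcases lt_trichotomy (η qhi x) 0 with h2 | h2 | h2
        · left
          intro q hq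
          rw [hη] at h2 ⊢
          have hle : α q ≤ α qhi := (hαmono.monotoneOn) hq hqhiQ hq.2
          nlinarith
        · right; left; exact ⟨qhi, hqhiQ, h2⟩
        · have hcont : ContinuousOn (fun q => η q x) (Icc qlo qhi) := by
            have : (fun q => η q x) = fun q => α q * (x - d x) - r := funext fun q => hη q x
            rw [this]
            exact (hαcont.mul continuousOn_const).sub continuousOn_const
          obtain ⟨q0, hq0m, hq0⟩ := intermediate_value_Icc hqQ.le hcont ⟨h1.le, h2.le⟩
          right; left; exact ⟨q0, hq0m, hq0⟩
      · right; left; exact ⟨qlo, hqloQ, h1⟩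
      · right; right
        intro q hq
        rw [hη] at h1 ⊢
        have hle : α qlo ≤ α q := (hαmono.monotoneOn) hqloQ hq hq.1
        nlinarith
  -- Lemma A
  have lemA : ∀ x ∈ Icc tlo thi, lam x < qhi → ∀ q ∈ Icc qlo qhi, lam x ≤ q → r ≤ α q * x := by
    intro x hx hlt q hq hle
    rcases tri x hx with hneg | ⟨q0, hq0m, hq0⟩ | hpos
    · rw [hlamHi x hx hneg] at hlt; exact absurd hlt (lt_irrefl _)
    · have hlamx := hlamMid x hx q0 hq0m hq0
      rw [hη] at hq0
      have hsx : 0 < x - d x := by nlinarith [hαpos q0 hq0m]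
      have hαle : α q0 ≤ α q := (hαmono.monotoneOn) hq0m hq (by rw [← hlamx]; exact hle)
      have hdx : 0 ≤ d x := hdnn x hx
      nlinarith [hαpos q hq]
    · have h := hpos q hq
      rw [hη] at h
      have hsx : 0 < x - d x := by nlinarith [hαpos q hq]
      nlinarith [hdnn x hx, hαpos q hq]
  -- Lemma B : antitone
  have lemB : ∀ x ∈ Icc tlo thi, ∀ y ∈ Icc tlo thi, x ≤ y → lam y ≤ lam x := by
    intro x hx y hy hxy
    rcases tri x hx with hneg | ⟨q0, hq0m, hq0⟩ | hpos
    · rw [hlamHi x hx hneg]; exact (hlamQ y hy).2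
    · have hlx := hlamMid x hx q0 hq0m hq0
      rw [hη] at hq0
      have hsx : 0 < x - d x := by nlinarith [hαpos q0 hq0m]
      have hsxy : x - d x ≤ y - d y := hsmono hx hy hxy
      have hηy : 0 ≤ α q0 * (y - d y) - r := by nlinarith [hαpos q0 hq0m]
      rcases eq_or_lt_of_le hηy with heq | hlt'
      · rw [hlamMid y hy q0 hq0m (by rw [hη]; linarith), hlx]
      · rcases tri y hy with hneg' | ⟨q1, hq1m, hq1⟩ | hpos'
        · exfalso; have := hneg' q0 hq0m; rw [hη] at this; linarith
        · have hly := hlamMid y hy q1 hq1m hq1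
          rw [hη] at hq1
          have hsy : 0 < y - d y := lt_of_lt_of_le hsx hsxy
          have hαlt : α q1 < α q0 := by nlinarith
          have hq10 : q1 < q0 := by
            by_contra hcon
            push_neg at hcon
            have := (hαmono.monotoneOn) hq0m hq1m hcon
            linarith
          rw [hly, hlx]; exact hq10.le
        · rw [hlamLo y hy hpos', hlx]; exact hq0m.1
    · have hlx := hlamLo x hx hpos
      have hpos' : ∀ q ∈ Icc qlo qhi, 0 < η q y := by
        intro q hq
        have h := hpos q hq
        rw [hη] at h ⊢
        have hsx : 0 < x - d x := by nlinarith [hαpos q hq]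
        have hsxy : x - d x ≤ y - d y := hsmono hx hy hxy
        nlinarith [hαpos q hq]
      rw [hlamLo y hy hpos', hlx]
  -- facts at thi
  have hηqhithi : 0 < η qhi thi := by rw [hη, hdthi]; nlinarith
  have hΛlt : lam thi < qhi := by
    rcases tri thi hthiI with hneg | ⟨q0, hq0m, hq0⟩ | hpos
    · linarith [hneg qhi hqhiQ]
    · rw [hlamMid thi hthiI q0 hq0m hq0]
      refine lt_of_le_of_ne hq0m.2 fun h => ?_
      rw [h] at hq0; linarith
    · rw [hlamLo thi hthiI hpos]; exact hqQ
  have hΛmem : lam thi ∈ Icc qlo qhi := hlamQ thi hthiI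
  -- dichotomy at thi
  have hdich : lam thi = qlo ∨ α (lam thi) * thi = r := by
    rcases tri thi hthiI with hneg | ⟨q0, hq0m, hq0⟩ | hpos
    · linarith [hneg qhi hqhiQ]
    · right
      have hl := hlamMid thi hthiI q0 hq0m hq0
      rw [hη, hdthi] at hq0
      rw [hl]; linarith
    · left; exact hlamLo thi hthiI hpos
  -- t1 facts
  have hthiS : thi ∈ {t | t ∈ Icc tlo thi ∧ lam t < qhi} := ⟨hthiI, hΛlt⟩
  have hSsub : {t | t ∈ Icc tlo thi ∧ lam t < qhi} ⊆ Icc tlo thi := fun x hx => hx.1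
  have hSb : BddBelow {t | t ∈ Icc tlo thi ∧ lam t < qhi} := (bddBelow_Icc).mono hSsub
  have hSeq : {t ∈ Icc tlo thi | lam t < qhi} = {t | t ∈ Icc tlo thi ∧ lam t < qhi} := rfl
  have ht1le : t1 ≤ thi := by rw [ht1, hSeq]; exact csInf_le hSb hthiS
  have ht1ge : tlo ≤ t1 := by
    rw [ht1, hSeq]; exact le_csInf ⟨thi, hthiS⟩ fun x hx => hx.1.1
  have hmemT : ∀ x ∈ Ioc t1 thi, x ∈ Icc tlo thi :=
    fun x hx => ⟨le_trans ht1ge hx.1.le, hx.2⟩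
  have hlamlt : ∀ x ∈ Ioc t1 thi, lam x < qhi := by
    intro x hx
    obtain ⟨x', hx'S, hx'lt⟩ := exists_lt_of_csInf_lt ⟨thi, hthiS⟩ (by rw [ht1, hSeq] at hx; exact hx.1)
    calc lam x ≤ lam x' := lemB x' hx'S.1 x (hmemT x hx) hx'lt.le
      _ < qhi := hx'S.2
  -- integrability of α*g
  have hαg : IntervalIntegrable (fun q => α q * g q) volume qlo qhi := by
    apply hgint.continuousOn_mul
    rwa [uIcc_of_le hqQ.le]
  have hαgsub : ∀ a b, a ∈ Icc qlo qhi → b ∈ Icc qlo qhi →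
      IntervalIntegrable (fun q => α q * g q) volume a b := by
    intro a b ha hb
    apply hαg.mono_set
    rw [uIcc_of_le hqQ.le]
    exact uIcc_subset_Icc ha hb
  have hgsub : ∀ a b, a ∈ Icc qlo qhi → b ∈ Icc qlo qhi →
      IntervalIntegrable g volume a b := by
    intro a b ha hb
    apply hgint.mono_set
    rw [uIcc_of_le hqQ.le]
    exact uIcc_subset_Icc ha hb
  have hGftc : ∀ a b, a ∈ Icc qlo qhi → b ∈ Icc qlo qhi → a ≤ b →
      (∫ q in a..b, g q) = G b - G a := by
    intro a b ha hb hab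
    apply intervalIntegral.integral_eq_sub_of_hasDerivAt
    · intro q hq
      rw [uIcc_of_le hab] at hq
      exact hG q ⟨le_trans ha.1 hq.1, le_trans hq.2 hb.2⟩
    · exact hgsub a b ha hb
  have hint2 : (∫ q in lam thi..qhi, g q) = 1 - G (lam thi) := by
    rw [hGftc (lam thi) qhi hΛmem hqhiQ hΛmem.2, hG1]
  have hGΛpos : 0 < 1 - G (lam thi) := by
    rw [← hint2]
    apply intervalIntegral.intervalIntegral_pos_of_pos_on (hgsub _ _ hΛmem hqhiQ)
    · intro q hq
      exact hgpos q ⟨le_trans hΛmem.1 hq.1.le, hq.2.le⟩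
    · exact hΛlt
  -- clamped alpha
  set αE : ℝ → ℝ := fun q => α (max qlo (min q qhi)) with hαEdef
  have hclampmem : ∀ q : ℝ, max qlo (min q qhi) ∈ Icc qlo qhi :=
    fun q => ⟨le_max_left _ _, max_le hqQ.le (min_le_right _ _)⟩
  have hαEcont : Continuous αE := by
    apply hαcont.comp_continuous (continuous_const.max (continuous_id.min continuous_const))
    exact hclampmem
  have hαEeq : ∀ q ∈ Icc qlo qhi, αE q = α q := by
    intro q hq
    rw [hαEdef]
    simp only [min_eq_left hq.2, max_eq_right hq.1]
  have hαElb : ∀ q, α qlo ≤ αE q :=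
    fun q => (hαmono.monotoneOn) hqloQ (hclampmem q) (le_max_left _ _)
  have hαEpos : ∀ q, 0 < αE q := fun q => lt_of_lt_of_le hαloP (hαElb q)
  -- integrability on Ioc (lam thi) qhi
  have hIole : ∀ x ∈ Icc qlo qhi, Ioc x qhi ⊆ Icc qlo qhi :=
    fun x hx => fun q hq => ⟨le_trans hx.1 hq.1.le, hq.2⟩
  have hαgIocInt : ∀ x ∈ Icc qlo qhi, IntegrableOn (fun q => α q * g q) (Ioc x qhi) := by
    intro x hx
    exact (intervalIntegrable_iff_integrableOn_Ioc_of_le hx.2).1 (hαgsub x qhi hx hqhiQ)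
  have hαEgInt : IntegrableOn (fun q => αE q * g q) (Ioc (lam thi) qhi) := by
    refine (hαgIocInt (lam thi) hΛmem).congr_fun ?_ measurableSet_Ioc
    intro q hq
    simp only [hαEeq q (hIole (lam thi) hΛmem hq)]
  have hαEgnn : ∀ q ∈ Ioc (lam thi) qhi, 0 ≤ αE q * g q := by
    intro q hq
    exact mul_nonneg (hαEpos q).le (hgpos q (hIole (lam thi) hΛmem hq)).le
  -- the ite function and its integrability
  have hSx : ∀ x : ℝ, MeasurableSet {q : ℝ | r ≤ x * αE q} :=
    fun x => (isClosed_le continuous_const (continuous_const.mul hαEcont)).measurableSet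
  have hiteint : ∀ x : ℝ,
      IntegrableOn (fun q => if r ≤ x * αE q then αE q * g q else 0) (Ioc (lam thi) qhi) := by
    intro x
    have hmeas : AEStronglyMeasurable (fun q => if r ≤ x * αE q then αE q * g q else 0)
        (volume.restrict (Ioc (lam thi) qhi)) := by
      have h1 : AEStronglyMeasurable (fun q => αE q * g q)
          (volume.restrict (Ioc (lam thi) qhi)) := hαEgInt.1
      have := h1.indicator (hSx x)
      refine this.congr (Filter.Eventually.of_forall fun q => ?_)
      simp [Set.indicator_apply]
    refine hαEgInt.norm.mono' hmeas ?_
    refine Filter.Eventually.of_forall fun q => ?_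
    by_cases h : r ≤ x * αE q <;> simp [h] <;> positivity
  -- pointwise bound on Rstar
  have hRle : ∀ x ∈ Ioc t1 thi, Rstar x ≤
      ∫ q in Ioc (lam thi) qhi, (if r ≤ x * αE q then αE q * g q else 0) := by
    intro x hx
    have hxI := hmemT x hx
    have hlx : lam x < qhi := hlamlt x hx
    have hlxmem := hlamQ x hxI
    have hΛlex : lam thi ≤ lam x := lemB x hxI thi hthiI hx.2
    rw [hRstar, intervalIntegral.integral_of_le hlxmem.2]
    have heqon : EqOn (fun q => α q * g q)
        (fun q => if r ≤ x * αE q then αE q * g q else 0) (Ioc (lam x) qhi) := by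
      intro q hq
      have hqQ2 : q ∈ Icc qlo qhi := hIole (lam x) hlxmem hq
      have hcond : r ≤ x * αE q := by
        rw [hαEeq q hqQ2, mul_comm]
        exact lemA x hxI hlx q hqQ2 hq.1.le
      show α q * g q = if r ≤ x * αE q then αE q * g q else 0
      rw [if_pos hcond, hαEeq q hqQ2]
    calc (∫ q in Ioc (lam x) qhi, α q * g q)
        = ∫ q in Ioc (lam x) qhi, (if r ≤ x * αE q then αE q * g q else 0) :=
          setIntegral_congr_fun measurableSet_Ioc heqon
      _ ≤ ∫ q in Ioc (lam thi) qhi, (if r ≤ x * αE q then αE q * g q else 0) := by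
          apply setIntegral_mono_set (hiteint x)
          · refine (ae_restrict_iff' measurableSet_Ioc).2 (Filter.Eventually.of_forall ?_)
            intro q hq
            by_cases h : r ≤ x * αE q <;> simp [h, hαEgnn q hq]
          · exact (Ioc_subset_Ioc_left hΛlex).eventuallyLE
  -- integrability of Rstar and of the inner function on Ioc t1 thi
  have hRmono : MonotoneOn Rstar (Icc t1 thi) := by
    intro a ha b hb hab
    have haI : a ∈ Icc tlo thi := ⟨le_trans ht1ge ha.1, ha.2⟩
    have hbI : b ∈ Icc tlo thi := ⟨le_trans ht1ge hb.1, hb.2⟩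
    have hba : lam b ≤ lam a := lemB a haI b hbI hab
    have hlaQ := hlamQ a haI
    have hlbQ := hlamQ b hbI
    rw [hRstar, hRstar, intervalIntegral.integral_of_le hlaQ.2,
      intervalIntegral.integral_of_le hlbQ.2]
    apply setIntegral_mono_set (hαgIocInt (lam b) hlbQ)
    · refine (ae_restrict_iff' measurableSet_Ioc).2 (Filter.Eventually.of_forall ?_)
      intro q hq
      have hqQ2 : q ∈ Icc qlo qhi := hIole (lam b) hlbQ hq
      exact mul_nonneg (hαpos q hqQ2).le (hgpos q hqQ2).le
    · exact (Ioc_subset_Ioc_left hba).eventuallyLE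
  have hRint : IntegrableOn Rstar (Ioc t1 thi) :=
    (hRmono.integrableOn_isCompact isCompact_Icc).mono_set Ioc_subset_Icc_self
  have hInnerMono : Monotone (fun x => ∫ q in Ioc (lam thi) qhi,
      (if r ≤ x * αE q then αE q * g q else 0)) := by
    intro x y hxy
    apply setIntegral_mono_on (hiteint x) (hiteint y) measurableSet_Ioc
    intro q hq
    by_cases h : r ≤ x * αE q
    · have h2 : r ≤ y * αE q := le_trans h (by nlinarith [hαEpos q])
      simp [h, h2]
    · by_cases h2 : r ≤ y * αE q <;> simp [h, h2, hαEgnn q hq]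
  have hInnerInt : IntegrableOn (fun x => ∫ q in Ioc (lam thi) qhi,
      (if r ≤ x * αE q then αE q * g q else 0)) (Ioc t1 thi) :=
    ((hInnerMono.monotoneOn _).integrableOn_isCompact (isCompact_Icc (a := t1) (b := thi))).mono_set
      Ioc_subset_Icc_self
  -- the key bound on J
  have hJle : (∫ x in t1..thi, Rstar x) ≤
      thi * (∫ q in lam thi..qhi, α q * g q) - r * (1 - G (lam thi)) := by
    rw [intervalIntegral.integral_of_le ht1le]
    have step1 : (∫ x in Ioc t1 thi, Rstar x) ≤ ∫ x in Ioc t1 thi,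
        (∫ q in Ioc (lam thi) qhi, (if r ≤ x * αE q then αE q * g q else 0)) :=
      setIntegral_mono_on hRint hInnerInt measurableSet_Ioc hRle
    have step2 : (∫ x in Ioc t1 thi,
        (∫ q in Ioc (lam thi) qhi, (if r ≤ x * αE q then αE q * g q else 0)))
        ≤ ∫ q in Ioc (lam thi) qhi, (thi - r / αE q) * (αE q * g q) := by
      apply aux_swap t1 thi (lam thi) qhi r ht1le hΛmem.2 αE (fun q => αE q * g q) hαEcont
        (α qlo) hαloP hαElb hαEgInt hαEgnn
      intro q hq
      have hqQ2 : q ∈ Icc qlo qhi := hIole (lam thi) hΛmem hq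
      rw [hαEeq q hqQ2]
      exact lemA thi hthiI hΛlt q hqQ2 hq.1.le
    have step3 : (∫ q in Ioc (lam thi) qhi, (thi - r / αE q) * (αE q * g q))
        = thi * (∫ q in lam thi..qhi, α q * g q) - r * (1 - G (lam thi)) := by
      have heq : EqOn (fun q => (thi - r / αE q) * (αE q * g q))
          (fun q => thi * (α q * g q) - r * g q) (Ioc (lam thi) qhi) := by
        intro q hq
        have hqQ2 : q ∈ Icc qlo qhi := hIole (lam thi) hΛmem hq
        have hne : α q ≠ 0 := (hαpos q hqQ2).ne'
        show (thi - r / αE q) * (αE q * g q) = thi * (α q * g q) - r * g q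
        rw [hαEeq q hqQ2]
        field_simp
      rw [setIntegral_congr_fun measurableSet_Ioc heq]
      have hgIocInt : IntegrableOn g (Ioc (lam thi) qhi) :=
        (intervalIntegrable_iff_integrableOn_Ioc_of_le hΛmem.2).1 (hgsub _ _ hΛmem hqhiQ)
      rw [integral_sub ((hαgIocInt (lam thi) hΛmem).const_mul thi) (hgIocInt.const_mul r)]
      rw [integral_const_mul, integral_const_mul]
      rw [← intervalIntegral.integral_of_le hΛmem.2, ← intervalIntegral.integral_of_le hΛmem.2,
        hint2]
    linarith
  -- P ≥ r
  have hPge : r ≤ Pbstar thi := by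
    rw [hPb1 thi ht1le le_rfl, le_div_iff₀ hGΛpos]
    linarith
  -- final assembly
  intro t ht
  have hI0 : IntervalIntegrable (fun q => α q * g q) volume qlo (lam thi) :=
    hαgsub qlo (lam thi) hqloQ hΛmem
  have hI1 : IntervalIntegrable (fun q => α q * g q) volume (lam thi) qhi :=
    hαgsub _ _ hΛmem hqhiQ
  have hsplit : (∫ q in qlo..lam thi, α q * g q) + (∫ q in lam thi..qhi, α q * g q)
      = ∫ q in qlo..qhi, α q * g q :=
    intervalIntegral.integral_add_adjacent_intervals hI0 hI1
  have hRHS : (∫ q in lam thi..qhi, (α q * t - Pbstar thi) * g q)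
      = t * (∫ q in lam thi..qhi, α q * g q) - Pbstar thi * (1 - G (lam thi)) := by
    have heq : EqOn (fun q => (α q * t - Pbstar thi) * g q)
        (fun q => t * (α q * g q) - Pbstar thi * g q) (uIcc (lam thi) qhi) := fun q _ => by ring
    rw [intervalIntegral.integral_congr heq,
      intervalIntegral.integral_sub (hI1.const_mul t)
        ((hgsub _ _ hΛmem hqhiQ).const_mul (Pbstar thi)),
      intervalIntegral.integral_const_mul, intervalIntegral.integral_const_mul, hint2]
  have hGlo : (∫ q in qlo..lam thi, g q) = G (lam thi) := by
    rw [hGftc qlo (lam thi) hqloQ hΛmem hΛmem.1, hG0]; ring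
  have hGlonn : 0 ≤ G (lam thi) := by
    rw [← hGlo]
    apply intervalIntegral.integral_nonneg hΛmem.1
    intro q hq
    exact (hgpos q ⟨hq.1, le_trans hq.2 hΛmem.2⟩).le
  have key : t * (∫ q in qlo..lam thi, α q * g q) ≤ Pbstar thi * G (lam thi) := by
    rcases hdich with h | h
    · rw [h]
      simp [hG0]
    · have hstep : ∀ q ∈ Icc qlo (lam thi), t * (α q * g q) ≤ r * g q := by
        intro q hq
        have hqQ2 : q ∈ Icc qlo qhi := ⟨hq.1, le_trans hq.2 hΛmem.2⟩
        have h1 : α q ≤ α (lam thi) := (hαmono.monotoneOn) hqQ2 hΛmem hq.2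
        have hgq := (hgpos q hqQ2).le
        have hαq := hαpos q hqQ2
        have hqt : α q * t ≤ r := by
          rcases le_or_gt 0 t with htp | htn
          · nlinarith [ht.2, hαpos (lam thi) hΛmem]
          · nlinarith
        nlinarith
      calc t * (∫ q in qlo..lam thi, α q * g q)
          = ∫ q in qlo..lam thi, t * (α q * g q) :=
            (intervalIntegral.integral_const_mul t _).symm
        _ ≤ ∫ q in qlo..lam thi, r * g q :=
            intervalIntegral.integral_mono_on hΛmem.1 (hI0.const_mul t)
              ((hgsub qlo _ hqloQ hΛmem).const_mul r) hstep
        _ = r * G (lam thi) := by rw [intervalIntegral.integral_const_mul, hGlo]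
        _ ≤ Pbstar thi * G (lam thi) := mul_le_mul_of_nonneg_right hPge hGlonn
  rw [hRHS, ← hsplit]
  have hexp : t * ((∫ q in qlo..lam thi, α q * g q) + ∫ q in lam thi..qhi, α q * g q)
      = t * (∫ q in qlo..lam thi, α q * g q) + t * ∫ q in lam thi..qhi, α q * g q := by ring
  rw [hexp]
  linarith [key]
end
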